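/- arXiv:1101.4389 — 2 statements merged into one kernel-verified Lean document; each statement's English description precedes it below -/
import Mathlib

section
/- Let \ell be \alpha times the unilateral shift creation operator on F(Ce) (\alpha > 0), let f be a polynomial, and set a = \ell + f(\ell^*). Let \varphi be the vacuum state and G(w) = \varphi((w - a)^{-1}) the Cauchy transform of the distribution of a. Then for sufficiently small |z| > 0, G(1/z + f(\alpha^2 z)) = z; i.e., the R-transform of the distribution of a in the vacuum state equals R(z) = f(\alpha^2 z). -/
set_option maxHeartbeats 1000000

open scoped ComplexConjugate

/-- Vectors in a Hilbert space agree if their inner products with all basis vectors agree. -/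
lemma hb_ext {H : Type*} [NormedAddCommGroup H] [InnerProductSpace ℂ H] [CompleteSpace H]
    (e : HilbertBasis ℕ ℂ H) {x y : H}
    (h : ∀ n : ℕ, (inner ℂ (e n) x : ℂ) = inner ℂ (e n) y) : x = y := by
  apply e.repr.injective
  apply lp.ext
  funext i
  rw [e.repr_apply_apply, e.repr_apply_apply]
  exact h i

lemma pow_eigen {H : Type*} [NormedAddCommGroup H] [InnerProductSpace ℂ H] [CompleteSpace H]
    (T : H →L[ℂ] H) (x : H) (c : ℂ) (hx : T x = c • x) (n : ℕ) : (T ^ n) x = c ^ n • x := by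
  induction n with
  | zero => simp
  | succ n ih =>
      rw [pow_succ, ContinuousLinearMap.mul_apply, hx, map_smul, ih, smul_smul, mul_comm,
        ← pow_succ]

lemma aeval_eigen {H : Type*} [NormedAddCommGroup H] [InnerProductSpace ℂ H] [CompleteSpace H]
    (T : H →L[ℂ] H) (x : H) (c : ℂ) (hx : T x = c • x) (p : Polynomial ℂ) :
    (Polynomial.aeval T p) x = p.eval c • x := by
  induction p using Polynomial.induction_on' with
  | add p q hp hq =>
      rw [map_add, ContinuousLinearMap.add_apply, hp, hq, Polynomial.eval_add, add_smul]
  | monomial n a =>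
      rw [Polynomial.aeval_monomial, Polynomial.eval_monomial,
        ContinuousLinearMap.mul_apply, pow_eigen T x c hx n]
      simp [smul_smul, Algebra.algebraMap_eq_smul_one, mul_comm]

/-- for the Toeplitz operator `a = ℓ + f(ℓ*)` on the full Fock space over a
one-dimensional Hilbert space (`ℓ e^{⊗n} = α e^{⊗(n+1)}`, `α > 0`, `f` a polynomial), the
Cauchy transform `G(w) = ⟨Ω, (w - a)⁻¹ Ω⟩` of the vacuum distribution of `a` satisfies
`G(1/z + f(α² z)) = z` for all sufficiently small `|z| > 0`; i.e. the R-transform of the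
distribution of `a` is `R(z) = f(α² z)`. -/
theorem stmt3 {H : Type*} [NormedAddCommGroup H] [InnerProductSpace ℂ H] [CompleteSpace H]
    (e : HilbertBasis ℕ ℂ H) (α : ℝ) (hα : 0 < α)
    (ℓ : H →L[ℂ] H) (hℓ : ∀ n : ℕ, ℓ (e n) = (α : ℂ) • e (n + 1))
    (f : Polynomial ℂ) :
    ∃ δ > 0, ∀ z : ℂ, 0 < ‖z‖ → ‖z‖ < δ →
      IsUnit ((z⁻¹ + f.eval ((α : ℂ) ^ 2 * z)) • (1 : H →L[ℂ] H)
          - (ℓ + Polynomial.aeval (ContinuousLinearMap.adjoint ℓ) f)) ∧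
        @inner ℂ H _ (e 0)
          ((Ring.inverse ((z⁻¹ + f.eval ((α : ℂ) ^ 2 * z)) • (1 : H →L[ℂ] H)
            - (ℓ + Polynomial.aeval (ContinuousLinearMap.adjoint ℓ) f))) (e 0)) = z := by
  set L := ContinuousLinearMap.adjoint ℓ with hL
  set a : H →L[ℂ] H := ℓ + Polynomial.aeval L f with ha
  have horth : Orthonormal ℂ e := e.orthonormal
  have hinner : ∀ m n : ℕ, (inner ℂ (e m) (e n) : ℂ) = if m = n then 1 else 0 := fun m n =>
    orthonormal_iff_ite.mp horth m n
  -- adjoint formulas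
  have hL0 : L (e 0) = 0 := by
    apply hb_ext e
    intro n
    rw [hL, ContinuousLinearMap.adjoint_inner_right, hℓ n, inner_smul_left, hinner]
    simp
  have hLs : ∀ n : ℕ, L (e (n + 1)) = (α : ℂ) • e n := by
    intro k
    apply hb_ext e
    intro n
    rw [hL, ContinuousLinearMap.adjoint_inner_right, hℓ n, inner_smul_left, hinner,
      inner_smul_right, hinner]
    simp only [Complex.conj_ofReal]
    by_cases h : n = k <;> simp [h]
  -- bound for f near 0
  obtain ⟨δ₁, hδ₁, hfb⟩ : ∃ δ₁ > 0, ∀ z : ℂ, ‖z‖ < δ₁ →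
      ‖f.eval ((α : ℂ) ^ 2 * z)‖ ≤ ‖f.eval 0‖ + 1 := by
    have hc : Continuous fun z : ℂ => f.eval ((α : ℂ) ^ 2 * z) := by
      apply f.continuous_aeval.comp (by continuity)
    obtain ⟨δ₁, hδ₁, h⟩ := Metric.continuous_iff.mp hc 0 1 one_pos
    refine ⟨δ₁, hδ₁, fun z hz => ?_⟩
    have h2 := h z (by simpa [dist_eq_norm] using hz)
    rw [dist_eq_norm] at h2
    have h0 : ((α : ℂ) ^ 2 * (0:ℂ)) = 0 := by ring
    rw [h0] at h2
    have h3 : ‖f.eval ((α : ℂ) ^ 2 * z)‖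
        ≤ ‖f.eval 0‖ + ‖f.eval 0 - f.eval ((α : ℂ) ^ 2 * z)‖ :=
      norm_le_norm_add_norm_sub _ _
    rw [norm_sub_rev] at h3
    linarith
  set C : ℝ := ‖f.eval 0‖ + 1 with hC
  have hCpos : 0 < C := by positivity
  refine ⟨min δ₁ (min (‖a‖ + C + 1)⁻¹ (α + 1)⁻¹), by positivity, ?_⟩
  intro z hz0 hzδ
  have hz1 : ‖z‖ < δ₁ := lt_of_lt_of_le hzδ (min_le_left _ _)
  have hz2 : ‖z‖ < (‖a‖ + C + 1)⁻¹ :=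
    lt_of_lt_of_le hzδ (le_trans (min_le_right _ _) (min_le_left _ _))
  have hz3 : ‖z‖ < (α + 1)⁻¹ :=
    lt_of_lt_of_le hzδ (le_trans (min_le_right _ _) (min_le_right _ _))
  have hzne : z ≠ 0 := by simpa using (norm_pos_iff.mp hz0)
  set w : ℂ := z⁻¹ + f.eval ((α : ℂ) ^ 2 * z) with hw
  -- ‖w‖ large
  have hfC : ‖f.eval ((α : ℂ) ^ 2 * z)‖ ≤ C := hfb z hz1
  have hzinv : ‖a‖ + C + 1 ≤ ‖z‖⁻¹ := by
    rw [← inv_inv (‖a‖ + C + 1)]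
    exact inv_anti₀ hz0 (le_of_lt hz2)
  have hwlarge : ‖a‖ + 1 ≤ ‖w‖ := by
    have h1 : ‖(z⁻¹ : ℂ)‖ = ‖z‖⁻¹ := norm_inv z
    have h2 : ‖(z⁻¹ : ℂ)‖ ≤ ‖w‖ + ‖f.eval ((α : ℂ) ^ 2 * z)‖ := by
      have h3 : (z⁻¹ : ℂ) = w - f.eval ((α : ℂ) ^ 2 * z) := by rw [hw]; ring
      rw [h3]; exact norm_sub_le _ _
    linarith
  have hwpos : 0 < ‖w‖ := lt_of_lt_of_le (by positivity) hwlarge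
  have hwne : w ≠ 0 := norm_pos_iff.mp hwpos
  -- invertibility
  have hsmall : ‖w⁻¹ • a‖ < 1 := by
    rw [norm_smul, norm_inv]
    calc ‖w‖⁻¹ * ‖a‖ < ‖w‖⁻¹ * ‖w‖ :=
          mul_lt_mul_of_pos_left (by linarith) (by positivity)
      _ = 1 := inv_mul_cancel₀ (ne_of_gt hwpos)
  have hfactor : w • (1 : H →L[ℂ] H) - a = (w • (1 : H →L[ℂ] H)) * (1 - w⁻¹ • a) := by
    rw [mul_sub, mul_one, smul_mul_assoc, one_mul, smul_smul, mul_inv_cancel₀ hwne, one_smul]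
  have hu1 : IsUnit (w • (1 : H →L[ℂ] H)) := by
    refine ⟨⟨w • 1, w⁻¹ • 1, ?_, ?_⟩, rfl⟩ <;>
      simp [smul_smul, mul_inv_cancel₀ hwne, inv_mul_cancel₀ hwne]
  have hu2 : IsUnit (1 - w⁻¹ • a) := (Units.oneSub _ hsmall).isUnit
  have hunit : IsUnit (w • (1 : H →L[ℂ] H) - a) := hfactor ▸ hu1.mul hu2
  refine ⟨hunit, ?_⟩
  -- the eigenvector ξ
  have hαz : ‖(α : ℂ) * z‖ < 1 := by
    rw [norm_mul, Complex.norm_real, Real.norm_eq_abs, abs_of_pos hα]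
    calc α * ‖z‖ < α * (α + 1)⁻¹ := mul_lt_mul_of_pos_left hz3 hα
      _ < (α + 1) * (α + 1)⁻¹ :=
          mul_lt_mul_of_pos_right (by linarith) (by positivity)
      _ = 1 := mul_inv_cancel₀ (by positivity)
  have hsum : Summable fun n : ℕ => ((α : ℂ) * z) ^ n • e n := by
    apply Summable.of_norm
    have hnn : ∀ n : ℕ, ‖((α : ℂ) * z) ^ n • e n‖ = ‖(α : ℂ) * z‖ ^ n := by
      intro n
      rw [norm_smul, norm_pow, horth.1 n, mul_one]
    rw [funext hnn]
    exact summable_geometric_of_lt_one (norm_nonneg _) hαz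
  set ξ : H := ∑' n : ℕ, ((α : ℂ) * z) ^ n • e n with hξ
  -- L ξ = α² z • ξ
  have hLξ : L ξ = ((α : ℂ) ^ 2 * z) • ξ := by
    rw [hξ, L.map_tsum hsum]
    have hsum2 : Summable fun n : ℕ => ((α : ℂ) * z) ^ n • L (e n) :=
      (hsum.map L L.continuous).congr fun n => map_smul L _ _
    have hterm : (fun n : ℕ => L (((α : ℂ) * z) ^ n • e n))
        = fun n => ((α : ℂ) * z) ^ n • L (e n) := by
      funext n; rw [map_smul]
    rw [hterm, hsum2.tsum_eq_zero_add]
    simp only [hL0, smul_zero, zero_add, hLs, smul_smul]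
    rw [← tsum_const_smul'' ((α : ℂ) ^ 2 * z)]
    congr 1
    funext n
    rw [smul_smul]
    congr 1
    ring
  -- ξ = e 0 + z • ℓ ξ
  have hξsplit : ξ = (e 0 : H) + ∑' n : ℕ, ((α : ℂ) * z) ^ (n + 1) • e (n + 1) := by
    rw [hξ, hsum.tsum_eq_zero_add, pow_zero, one_smul]
  have hzℓξ : z • ℓ ξ = ∑' n : ℕ, ((α : ℂ) * z) ^ (n + 1) • e (n + 1) := by
    have h1 : ℓ ξ = ∑' n : ℕ, ((α : ℂ) * z) ^ n • ((α : ℂ) • e (n + 1)) := by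
      rw [hξ, ℓ.map_tsum hsum]
      congr 1
      funext n
      rw [map_smul, hℓ]
    rw [h1, ← tsum_const_smul'' z]
    congr 1
    funext n
    rw [smul_smul, smul_smul]
    congr 1
    ring
  have hℓξ : ξ = (e 0 : H) + z • ℓ ξ := by rw [hzℓξ]; exact hξsplit
  have he0 : (e 0 : H) = ξ - z • ℓ ξ := eq_sub_of_add_eq hℓξ.symm
  -- key identity
  have haξ : a ξ = ℓ ξ + f.eval ((α : ℂ) ^ 2 * z) • ξ := by
    rw [ha, ContinuousLinearMap.add_apply, aeval_eigen L ξ _ hLξ f]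
  have hBξ : (w • (1 : H →L[ℂ] H) - a) ξ = z⁻¹ • (e 0 : H) := by
    rw [ContinuousLinearMap.sub_apply, ContinuousLinearMap.smul_apply,
      ContinuousLinearMap.one_apply, haξ, hw, he0, add_smul, smul_sub, smul_smul,
      inv_mul_cancel₀ hzne, one_smul]
    abel
  have hkey : (w • (1 : H →L[ℂ] H) - a) (z • ξ) = e 0 := by
    rw [map_smul, hBξ, smul_smul, mul_inv_cancel₀ hzne, one_smul]
  have hinv : (Ring.inverse (w • (1 : H →L[ℂ] H) - a)) (e 0) = z • ξ := by
    conv_lhs => rw [← hkey]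
    rw [← ContinuousLinearMap.mul_apply, Ring.inverse_mul_cancel _ hunit,
      ContinuousLinearMap.one_apply]
  rw [hinv, inner_smul_right]
  have hterm : ∀ n : ℕ, (innerSL ℂ (e 0 : H)) (((α : ℂ) * z) ^ n • e n)
      = if n = 0 then 1 else 0 := by
    intro n
    rcases n with _ | n
    · simp only [innerSL_apply_apply, inner_smul_right, hinner]
      simp
    · simp only [innerSL_apply_apply, inner_smul_right, hinner]
      simp
  have hin : (innerSL ℂ (e 0 : H)) ξ = 1 := by
    rw [hξ, (innerSL ℂ (e 0 : H)).map_tsum hsum, funext hterm]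
    simp
  rw [← innerSL_apply_apply (𝕜 := ℂ) (e 0 : H) ξ, hin, mul_one]
end

section
/- Let \mu_1, \mu_2 be compactly supported probability measures on R. The Cauchy transform of the monotone convolution \mu_1 \triangleright \mu_2 satisfies G_{\mu_1 \triangleright \mu_2}(z) = 1/(z - R_{\mu_1}(G_{\mu_1 \triangleright \mu_2}(z)) - R_{\mu_2}(G_{\mu_2}(z))) for z in a neighborhood of infinity. -/
open MeasureTheory

/-- The Cauchy transform `G_μ(z) = ∫ (z - x)⁻¹ dμ(x)` of a measure on `ℝ`. -/
noncomputable def cauchyT (μ : Measure ℝ) (z : ℂ) : ℂ := ∫ x, (z - (x : ℂ))⁻¹ ∂μ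

lemma cauchy_bounds (μ : Measure ℝ) [IsProbabilityMeasure μ] (K : ℝ)
    (hK : 1 ≤ K) (hμK : μ (Set.Icc (-K) K)ᶜ = 0) (z : ℂ) (hz : 3 * K < ‖z‖) :
    cauchyT μ z ≠ 0 ∧ ‖cauchyT μ z‖ ≤ 3 / (2 * ‖z‖) := by
  have hKz : K < ‖z‖ := by linarith
  have hK0 : 0 < K := by linarith
  have hz0 : 0 < ‖z‖ := by linarith
  have hae : ∀ᵐ x ∂μ, x ∈ Set.Icc (-K) K := by
    rw [ae_iff]
    exact hμK
  have hxbound : ∀ x : ℝ, x ∈ Set.Icc (-K) K → ‖(x : ℂ)‖ ≤ K ∧ ‖z - (x:ℂ)‖ ≥ ‖z‖ - K := by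
    intro x hx
    have h1 : ‖(x : ℂ)‖ ≤ K := by
      rw [Complex.norm_real, Real.norm_eq_abs, abs_le]
      exact ⟨hx.1, hx.2⟩
    refine ⟨h1, ?_⟩
    calc ‖z - (x:ℂ)‖ ≥ ‖z‖ - ‖(x:ℂ)‖ := norm_sub_norm_le _ _
      _ ≥ ‖z‖ - K := by linarith
  have hmeas : AEStronglyMeasurable (fun x : ℝ => (z - (x:ℂ))⁻¹) μ := by
    apply Measurable.aestronglyMeasurable
    exact ((Complex.measurable_ofReal.const_sub z).inv)
  have hInt : Integrable (fun x : ℝ => (z - (x:ℂ))⁻¹) μ := by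
    refine ⟨hmeas, ?_⟩
    apply MeasureTheory.HasFiniteIntegral.of_bounded (C := (‖z‖ - K)⁻¹)
    filter_upwards [hae] with x hx
    rw [norm_inv]
    exact inv_anti₀ (by linarith) (hxbound x hx).2
  have hInt2 : Integrable (fun x : ℝ => z * (z - (x:ℂ))⁻¹ - 1) μ :=
    (hInt.const_mul z).sub (integrable_const 1)
  have hkey : ‖z * cauchyT μ z - 1‖ ≤ 1 / 2 := by
    have heq : z * cauchyT μ z - 1 = ∫ x, (z * (z - (x:ℂ))⁻¹ - 1) ∂μ := by
      rw [integral_sub (hInt.const_mul z) (integrable_const 1), integral_const_mul]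
      simp [cauchyT, measure_univ]
    rw [heq]
    have hb : ∀ᵐ (x : ℝ) ∂μ, ‖z * (z - (x:ℂ))⁻¹ - 1‖ ≤ 1 / 2 := by
      filter_upwards [hae] with x hx
      have hzx : z - (x:ℂ) ≠ 0 := by
        intro h
        have := (hxbound x hx).2
        rw [h, norm_zero] at this
        linarith
      have : z * (z - (x:ℂ))⁻¹ - 1 = (x:ℂ) * (z - (x:ℂ))⁻¹ := by
        field_simp
        ring
      rw [this, norm_mul, norm_inv]
      have h1 := (hxbound x hx).1
      have h2 := (hxbound x hx).2
      have h3 : ‖z - (x:ℂ)‖⁻¹ ≤ (‖z‖ - K)⁻¹ := inv_anti₀ (by linarith) h2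
      have h4 : (‖z‖ - K)⁻¹ ≤ (2 * K)⁻¹ := inv_anti₀ (by linarith) (by linarith)
      calc ‖(x:ℂ)‖ * ‖z - (x:ℂ)‖⁻¹ ≤ K * (2 * K)⁻¹ := by
            apply mul_le_mul h1 (le_trans h3 h4) (by positivity) (le_of_lt hK0)
        _ = 1 / 2 := by field_simp
    have hbnd := norm_integral_le_of_norm_le_const (μ := μ) hb
    simpa [measure_univ] using hbnd
  have hlow : (1:ℝ)/2 ≤ ‖z * cauchyT μ z‖ := by
    have h1 : ‖(1:ℂ)‖ - ‖z * cauchyT μ z‖ ≤ ‖(1:ℂ) - z * cauchyT μ z‖ := norm_sub_norm_le _ _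
    rw [norm_sub_rev] at h1
    rw [norm_one] at h1
    linarith
  have hhigh : ‖z * cauchyT μ z‖ ≤ 3/2 := by
    have heq : z * cauchyT μ z = (z * cauchyT μ z - 1) + 1 := by ring
    rw [heq]
    calc ‖(z * cauchyT μ z - 1) + 1‖ ≤ ‖z * cauchyT μ z - 1‖ + ‖(1:ℂ)‖ := norm_add_le _ _
      _ ≤ 3/2 := by rw [norm_one]; linarith
  constructor
  · intro h
    rw [h, mul_zero, norm_zero] at hlow
    linarith
  · rw [norm_mul] at hhigh
    rw [le_div_iff₀ (by positivity)]
    nlinarith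

/-- for compactly supported probability measures `μ₁, μ₂` with R-transforms
`R₁, R₂` (characterized by `F_μ(z) = 1/G_μ(z) = z - R_μ(G_μ(z))` near infinity), the
monotone convolution `ν = μ₁ ▷ μ₂` (characterized by `F_ν = F_{μ₁} ∘ F_{μ₂}` near infinity)
satisfies `G_ν(z) = 1/(z - R₁(G_ν(z)) - R₂(G_{μ₂}(z)))` in a neighborhood of infinity. -/
theorem stmt8 (μ₁ μ₂ ν : Measure ℝ)
    [IsProbabilityMeasure μ₁] [IsProbabilityMeasure μ₂] [IsProbabilityMeasure ν]
    (K : ℝ) (hμ₁K : μ₁ (Set.Icc (-K) K)ᶜ = 0) (hμ₂K : μ₂ (Set.Icc (-K) K)ᶜ = 0)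
    (hνK : ν (Set.Icc (-K) K)ᶜ = 0)
    (R₁ R₂ : ℂ → ℂ)
    (hR₁ : ∃ M : ℝ, ∀ w : ℂ, M < ‖w‖ → (cauchyT μ₁ w)⁻¹ = w - R₁ (cauchyT μ₁ w))
    (hR₂ : ∃ M : ℝ, ∀ w : ℂ, M < ‖w‖ → (cauchyT μ₂ w)⁻¹ = w - R₂ (cauchyT μ₂ w))
    (hmono : ∃ M : ℝ, ∀ z : ℂ, M < ‖z‖ →
      (cauchyT ν z)⁻¹ = (cauchyT μ₁ ((cauchyT μ₂ z)⁻¹))⁻¹) :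
    ∃ M : ℝ, ∀ z : ℂ, M < ‖z‖ →
      cauchyT ν z = (z - R₁ (cauchyT ν z) - R₂ (cauchyT μ₂ z))⁻¹ := by
  obtain ⟨M₁, hM₁⟩ := hR₁
  obtain ⟨M₂, hM₂⟩ := hR₂
  obtain ⟨M₃, hM₃⟩ := hmono
  set K' := max K 1 with hK'
  have hK'1 : 1 ≤ K' := le_max_right _ _
  have hμ₂K' : μ₂ (Set.Icc (-K') K')ᶜ = 0 := by
    refine measure_mono_null ?_ hμ₂K
    apply Set.compl_subset_compl.mpr
    apply Set.Icc_subset_Icc <;> simp [hK', le_max_left, neg_le_neg]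
  refine ⟨max (3/2 * (|M₁| + 1)) (max M₂ (max M₃ (3 * K'))), fun z hz => ?_⟩
  have hzM₂ : M₂ < ‖z‖ := lt_of_le_of_lt (le_trans (le_max_left _ _) (le_max_right _ _)) hz
  have hzM₃ : M₃ < ‖z‖ :=
    lt_of_le_of_lt (le_trans (le_trans (le_max_left _ _) (le_max_right _ _)) (le_max_right _ _)) hz
  have hzK' : 3 * K' < ‖z‖ :=
    lt_of_le_of_lt (le_trans (le_trans (le_max_right _ _) (le_max_right _ _)) (le_max_right _ _)) hz
  have hzM₁ : 3/2 * (|M₁| + 1) < ‖z‖ := lt_of_le_of_lt (le_max_left _ _) hz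
  obtain ⟨hG2ne, hG2le⟩ := cauchy_bounds μ₂ K' hK'1 hμ₂K' z hzK'
  set G2 := cauchyT μ₂ z with hG2
  have hz0 : (0:ℝ) < ‖z‖ := by
    have : (0:ℝ) < 3 * K' := by positivity
    linarith
  have hG2pos : 0 < ‖G2‖ := norm_pos_iff.mpr hG2ne
  have hG2inv : M₁ < ‖G2⁻¹‖ := by
    rw [norm_inv]
    have h1 : (3 / (2 * ‖z‖))⁻¹ ≤ ‖G2‖⁻¹ := inv_anti₀ hG2pos hG2le
    have h2 : (3 / (2 * ‖z‖))⁻¹ = 2 * ‖z‖ / 3 := by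
      rw [inv_div]
    have h3 : M₁ ≤ |M₁| := le_abs_self M₁
    have h4 : |M₁| + 1 < 2 * ‖z‖ / 3 := by linarith
    linarith [h1, h2 ▸ h1]
  have e2 := hM₂ z hzM₂
  have e3 := hM₃ z hzM₃
  have e1 := hM₁ G2⁻¹ hG2inv
  have hGν : cauchyT ν z = cauchyT μ₁ G2⁻¹ := by
    have := congrArg Inv.inv e3
    simpa [inv_inv] using this
  have key : (cauchyT ν z)⁻¹ = z - R₁ (cauchyT ν z) - R₂ G2 := by
    rw [e3, e1, ← hGν, show G2⁻¹ = z - R₂ G2 from e2]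
    ring
  calc cauchyT ν z = ((cauchyT ν z)⁻¹)⁻¹ := (inv_inv _).symm
    _ = (z - R₁ (cauchyT ν z) - R₂ G2)⁻¹ := by rw [key]
end
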